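/- arXiv:2202.01725 — 2 statements merged into one kernel-verified Lean document; each statement's English description precedes it below -/
import Mathlib

section
/- Let φ₁ : ℝ^d → ℝ^{d'} be C₁-Lipschitz and φ₂ : ℝ^{d'} → ℝ^{d''} be C₂-Lipschitz. Define RN(X) := φ₂((1/N)∑_{x∈X} φ₁(x)) for a finite point cloud X of cardinality N. Then for any two finite point clouds X, Y in ℝ^d, ‖RN(X) − RN(Y)‖ ≤ C₁·C₂·W₁(m_X, m_Y), where m_X, m_Y are the empirical measures of X and Y. -/
open MeasureTheory ENNReal

noncomputable def W1 {E : Type*} [MeasurableSpace E] [NormedAddCommGroup E]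
    (μ ν : Measure E) : ℝ :=
  ⨅ π : {π : Measure (E × E) // π.map Prod.fst = μ ∧ π.map Prod.snd = ν},
    ∫ p, ‖p.1 - p.2‖ ∂(π.1)

noncomputable def empMeasure {E : Type*} [MeasurableSpace E] {N : ℕ} (X : Fin N → E) :
    Measure E :=
  (N : ℝ≥0∞)⁻¹ • ∑ i, Measure.dirac (X i)

noncomputable def RN {E F G : Type*} [NormedAddCommGroup F] [NormedSpace ℝ F] {N : ℕ}
    (φ₁ : E → F) (φ₂ : F → G) (X : Fin N → E) : G :=
  φ₂ ((N : ℝ)⁻¹ • ∑ i, φ₁ (X i))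

/- ### Auxiliary lemmas -/

lemma integrable_dirac' {α E : Type*} [MeasurableSpace α] [MeasurableSingletonClass α]
    [NormedAddCommGroup E] (f : α → E) (a : α) : Integrable f (Measure.dirac a) := by
  have h : f =ᵐ[Measure.dirac a] fun _ => f a := by
    rw [MeasureTheory.ae_dirac_eq]
    exact Filter.eventually_pure.2 rfl
  exact (integrable_const (f a)).congr h.symm

lemma empMeasure_univ {E : Type*} [MeasurableSpace E] {N : ℕ} (hN : 0 < N) (X : Fin N → E) :
    empMeasure X Set.univ = 1 := by
  simp only [empMeasure, Measure.smul_apply, Measure.coe_finset_sum, Finset.sum_apply,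
    smul_eq_mul, Measure.dirac_apply' _ MeasurableSet.univ, Set.indicator_univ,
    Pi.one_apply, Finset.sum_const, Finset.card_univ, Fintype.card_fin, nsmul_eq_mul, mul_one]
  exact ENNReal.inv_mul_cancel (by exact_mod_cast hN.ne') (natCast_ne_top N)

lemma empMeasure_prob {E : Type*} [MeasurableSpace E] {N : ℕ} (hN : 0 < N) (X : Fin N → E) :
    IsProbabilityMeasure (empMeasure X) := ⟨empMeasure_univ hN X⟩

lemma empMeasure_compl_range {E : Type*} [MeasurableSpace E] [MeasurableSingletonClass E]
    {N : ℕ} (X : Fin N → E) : empMeasure X (Set.range X)ᶜ = 0 := by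
  simp only [empMeasure, Measure.smul_apply, Measure.coe_finset_sum, Finset.sum_apply,
    smul_eq_mul]
  have : ∀ i : Fin N, Measure.dirac (X i) (Set.range X)ᶜ = 0 := by
    intro i
    rw [Measure.dirac_apply]
    exact Set.indicator_of_notMem (Set.notMem_compl_iff.mpr (Set.mem_range_self i)) _
  simp [this]

lemma integral_empMeasure {E F : Type*} [MeasurableSpace E] [MeasurableSingletonClass E]
    [NormedAddCommGroup F] [NormedSpace ℝ F] [CompleteSpace F] {N : ℕ} (X : Fin N → E)
    (f : E → F) : ∫ x, f x ∂(empMeasure X) = (N : ℝ)⁻¹ • ∑ i, f (X i) := by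
  rw [empMeasure, integral_smul_measure,
    integral_finset_sum_measure (fun i _ => integrable_dirac' f (X i))]
  simp [integral_dirac]

/-- The key per-coupling estimate. -/
lemma coupling_bound {d d' d'' : ℕ} {C₁ C₂ : NNReal}
    (φ₁ : EuclideanSpace ℝ (Fin d) → EuclideanSpace ℝ (Fin d'))
    (φ₂ : EuclideanSpace ℝ (Fin d') → EuclideanSpace ℝ (Fin d''))
    (h₁ : LipschitzWith C₁ φ₁) (h₂ : LipschitzWith C₂ φ₂)
    {N M : ℕ} (hN : 0 < N) (hM : 0 < M)
    (X : Fin N → EuclideanSpace ℝ (Fin d)) (Y : Fin M → EuclideanSpace ℝ (Fin d))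
    (π : Measure (EuclideanSpace ℝ (Fin d) × EuclideanSpace ℝ (Fin d)))
    (hπ1 : π.map Prod.fst = empMeasure X) (hπ2 : π.map Prod.snd = empMeasure Y) :
    ‖RN φ₁ φ₂ X - RN φ₁ φ₂ Y‖ ≤ (C₁ : ℝ) * (C₂ : ℝ) * ∫ p, ‖p.1 - p.2‖ ∂π := by
  haveI : Nonempty (Fin N) := Fin.pos_iff_nonempty.mp hN
  haveI : Nonempty (Fin M) := Fin.pos_iff_nonempty.mp hM
  haveI : IsProbabilityMeasure π := by
    constructor
    have := congrArg (fun m : Measure _ => m Set.univ) hπ1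
    simpa [Measure.map_apply measurable_fst MeasurableSet.univ,
      empMeasure_univ hN X] using this
  -- a.e. membership of coordinates in the ranges
  have hSmeas : MeasurableSet (Set.range X) := (Set.finite_range X).measurableSet
  have hTmeas : MeasurableSet (Set.range Y) := (Set.finite_range Y).measurableSet
  have haeX : ∀ᵐ p ∂π, p.1 ∈ Set.range X := by
    rw [ae_iff]
    have : {p : EuclideanSpace ℝ (Fin d) × EuclideanSpace ℝ (Fin d) | ¬ p.1 ∈ Set.range X}
        = Prod.fst ⁻¹' (Set.range X)ᶜ := rfl
    rw [this, ← Measure.map_apply measurable_fst hSmeas.compl, hπ1]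
    exact empMeasure_compl_range X
  have haeY : ∀ᵐ p ∂π, p.2 ∈ Set.range Y := by
    rw [ae_iff]
    have : {p : EuclideanSpace ℝ (Fin d) × EuclideanSpace ℝ (Fin d) | ¬ p.2 ∈ Set.range Y}
        = Prod.snd ⁻¹' (Set.range Y)ᶜ := rfl
    rw [this, ← Measure.map_apply measurable_snd hTmeas.compl, hπ2]
    exact empMeasure_compl_range Y
  -- bounds on finite ranges
  set BX : ℝ := Finset.univ.sup' Finset.univ_nonempty fun i => ‖φ₁ (X i)‖ with hBX
  set BY : ℝ := Finset.univ.sup' Finset.univ_nonempty fun i => ‖φ₁ (Y i)‖ with hBY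
  set DX : ℝ := Finset.univ.sup' Finset.univ_nonempty fun i => ‖X i‖ with hDX
  set DY : ℝ := Finset.univ.sup' Finset.univ_nonempty fun i => ‖Y i‖ with hDY
  have hφ₁c : Continuous φ₁ := h₁.continuous
  have int1 : Integrable (fun p : EuclideanSpace ℝ (Fin d) × EuclideanSpace ℝ (Fin d) =>
      φ₁ p.1) π := by
    refine (integrable_const BX).mono'
      ((hφ₁c.comp continuous_fst).aestronglyMeasurable) ?_
    filter_upwards [haeX] with p hp
    obtain ⟨i, hi⟩ := hp
    rw [← hi]
    exact Finset.le_sup' (fun i => ‖φ₁ (X i)‖) (Finset.mem_univ i)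
  have int2 : Integrable (fun p : EuclideanSpace ℝ (Fin d) × EuclideanSpace ℝ (Fin d) =>
      φ₁ p.2) π := by
    refine (integrable_const BY).mono'
      ((hφ₁c.comp continuous_snd).aestronglyMeasurable) ?_
    filter_upwards [haeY] with p hp
    obtain ⟨i, hi⟩ := hp
    rw [← hi]
    exact Finset.le_sup' (fun i => ‖φ₁ (Y i)‖) (Finset.mem_univ i)
  have int3 : Integrable (fun p : EuclideanSpace ℝ (Fin d) × EuclideanSpace ℝ (Fin d) =>
      ‖p.1 - p.2‖) π := by
    refine (integrable_const (DX + DY)).mono'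
      ((continuous_fst.sub continuous_snd).norm.aestronglyMeasurable) ?_
    filter_upwards [haeX, haeY] with p hp hq
    obtain ⟨i, hi⟩ := hp
    obtain ⟨j, hj⟩ := hq
    rw [norm_norm]
    refine (norm_sub_le _ _).trans (add_le_add ?_ ?_)
    · rw [← hi]; exact Finset.le_sup' (fun i => ‖X i‖) (Finset.mem_univ i)
    · rw [← hj]; exact Finset.le_sup' (fun i => ‖Y i‖) (Finset.mem_univ j)
  -- identification of the means as integrals against π
  have e1 : (N : ℝ)⁻¹ • ∑ i, φ₁ (X i) = ∫ p, φ₁ p.1 ∂π := by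
    rw [← integral_empMeasure X φ₁, ← hπ1,
      integral_map measurable_fst.aemeasurable]
    exact hφ₁c.aestronglyMeasurable
  have e2 : (M : ℝ)⁻¹ • ∑ i, φ₁ (Y i) = ∫ p, φ₁ p.2 ∂π := by
    rw [← integral_empMeasure Y φ₁, ← hπ2,
      integral_map measurable_snd.aemeasurable]
    exact hφ₁c.aestronglyMeasurable
  -- main chain of inequalities
  rw [RN, RN, e1, e2]
  calc ‖φ₂ (∫ p, φ₁ p.1 ∂π) - φ₂ (∫ p, φ₁ p.2 ∂π)‖
      ≤ (C₂ : ℝ) * ‖(∫ p, φ₁ p.1 ∂π) - ∫ p, φ₁ p.2 ∂π‖ := by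
        have := h₂.dist_le_mul (∫ p, φ₁ p.1 ∂π) (∫ p, φ₁ p.2 ∂π)
        simpa [dist_eq_norm] using this
    _ = (C₂ : ℝ) * ‖∫ p, (φ₁ p.1 - φ₁ p.2) ∂π‖ := by rw [integral_sub int1 int2]
    _ ≤ (C₂ : ℝ) * ∫ p, ‖φ₁ p.1 - φ₁ p.2‖ ∂π := by
        exact mul_le_mul_of_nonneg_left (norm_integral_le_integral_norm _) C₂.coe_nonneg
    _ ≤ (C₂ : ℝ) * ∫ p, (C₁ : ℝ) * ‖p.1 - p.2‖ ∂π := by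
        refine mul_le_mul_of_nonneg_left ?_ C₂.coe_nonneg
        refine integral_mono_of_nonneg (Filter.Eventually.of_forall fun p => norm_nonneg _)
          (int3.const_mul _) (Filter.Eventually.of_forall fun p => ?_)
        have := h₁.dist_le_mul p.1 p.2
        simpa [dist_eq_norm] using this
    _ = (C₁ : ℝ) * (C₂ : ℝ) * ∫ p, ‖p.1 - p.2‖ ∂π := by
        rw [integral_const_mul]; ring

/-- Pointwise Wasserstein stability of RipsNet. -/
theorem stmt1 {d d' d'' : ℕ} {C₁ C₂ : NNReal}
    (φ₁ : EuclideanSpace ℝ (Fin d) → EuclideanSpace ℝ (Fin d'))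
    (φ₂ : EuclideanSpace ℝ (Fin d') → EuclideanSpace ℝ (Fin d''))
    (h₁ : LipschitzWith C₁ φ₁) (h₂ : LipschitzWith C₂ φ₂)
    {N M : ℕ} (hN : 0 < N) (hM : 0 < M)
    (X : Fin N → EuclideanSpace ℝ (Fin d)) (Y : Fin M → EuclideanSpace ℝ (Fin d)) :
    ‖RN φ₁ φ₂ X - RN φ₁ φ₂ Y‖ ≤ (C₁ : ℝ) * (C₂ : ℝ) * W1 (empMeasure X) (empMeasure Y) := by
  haveI : Nonempty (Fin N) := Fin.pos_iff_nonempty.mp hN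
  haveI : Nonempty (Fin M) := Fin.pos_iff_nonempty.mp hM
  haveI := empMeasure_prob hN X
  haveI := empMeasure_prob hM Y
  -- the set of couplings is nonempty (product coupling)
  haveI hne : Nonempty {π : Measure (EuclideanSpace ℝ (Fin d) × EuclideanSpace ℝ (Fin d)) //
      π.map Prod.fst = empMeasure X ∧ π.map Prod.snd = empMeasure Y} := by
    refine ⟨⟨(empMeasure X).prod (empMeasure Y), ?_, ?_⟩⟩
    · rw [Measure.map_fst_prod]; simp
    · rw [Measure.map_snd_prod]; simp
  by_cases hC : (C₁ : ℝ) * (C₂ : ℝ) = 0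
  · -- degenerate case: RN X = RN Y
    have hRN : RN φ₁ φ₂ X = RN φ₁ φ₂ Y := by
      rcases mul_eq_zero.mp hC with h | h
      · have hC₁ : C₁ = 0 := by exact_mod_cast h
        subst hC₁
        have hconst : ∀ a b, φ₁ a = φ₁ b := fun a b => by
          have := h₁.dist_le_mul a b
          simpa [dist_le_zero] using this
        have h1 : ∀ i : Fin N, φ₁ (X i) = φ₁ (X ⟨0, hN⟩) := fun i => hconst _ _
        have h2 : ∀ i : Fin M, φ₁ (Y i) = φ₁ (X ⟨0, hN⟩) := fun i => hconst _ _
        simp only [RN]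
        rw [Finset.sum_congr rfl fun i _ => h1 i, Finset.sum_congr rfl fun i _ => h2 i]
        simp only [Finset.sum_const, Finset.card_univ, Fintype.card_fin]
        rw [← Nat.cast_smul_eq_nsmul ℝ, ← Nat.cast_smul_eq_nsmul ℝ, smul_smul, smul_smul,
          inv_mul_cancel₀ (by exact_mod_cast hN.ne'),
          inv_mul_cancel₀ (by exact_mod_cast hM.ne')]
      · have hC₂ : C₂ = 0 := by exact_mod_cast h
        subst hC₂
        have := h₂.dist_le_mul ((N : ℝ)⁻¹ • ∑ i, φ₁ (X i)) ((M : ℝ)⁻¹ • ∑ i, φ₁ (Y i))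
        simpa [RN, dist_le_zero] using this
    rw [hRN, hC]
    simp
  · have hCpos : 0 < (C₁ : ℝ) * (C₂ : ℝ) :=
      lt_of_le_of_ne (mul_nonneg C₁.coe_nonneg C₂.coe_nonneg) (Ne.symm hC)
    rw [mul_comm ((C₁ : ℝ) * (C₂ : ℝ)), ← div_le_iff₀ hCpos, W1]
    refine le_ciInf fun π => ?_
    rw [div_le_iff₀ hCpos, mul_comm]
    exact coupling_bound φ₁ φ₂ h₁ h₂ hN hM X Y π.1 π.2.1 π.2.2
end

section
/- Let f : X → ℝ and g : X → ℝ be functions on a set X such that |f(x) − g(x)| ≤ ε for all x. Then for each k, the k-th largest values (over a fixed finite index family) satisfy |k-max_i f_i − k-max_i g_i| ≤ ε; consequently, for persistence diagrams D, D' of equal cardinality matched pointwise within bottleneck distance ε (in sup norm on ℝ²), the landscapes satisfy sup_t |λ_k(D)(t) − λ_k(D')(t)| ≤ ε. -/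
open scoped Classical

/-- The `k`-th largest element of a list of reals (`0` if there are fewer than `k` elements). -/
noncomputable def kmax (l : List ℝ) (k : ℕ) : ℝ :=
  (l.insertionSort (· ≥ ·)).getD (k - 1) 0

/-- The tent function of a persistence diagram point `(b, d)`. -/
def tent (p : ℝ × ℝ) (t : ℝ) : ℝ :=
  max (min (t - p.1) (p.2 - t)) 0

/-- The `k`-th persistence landscape function of a finite diagram. -/
noncomputable def landscape {n : ℕ} (D : Fin n → ℝ × ℝ) (k : ℕ) (t : ℝ) : ℝ :=
  kmax (List.ofFn fun i => tent (D i) t) k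

/-!
In a list sorted in decreasing order, `c ≤ s[i]` holds exactly when at least `i + 1` entries
are `≥ c`. So the `k`-th largest value is characterised by counting, and raising every entry
by at most `ε` can only raise these counts at level `c - ε`, which moves the `k`-th largest
value by at most `ε`. For landscapes, each tent value moves by at most the sup-norm distance
of the matched points, and the `k`-th largest value ignores the order of the entries.
-/

namespace List

variable {α : Type*} [LinearOrder α] {s : List α}

theorem SortedGE.le_getElem_iff_lt_countP (hs : s.SortedGE) {i : ℕ} (hi : i < s.length)
    (c : α) : c ≤ s[i] ↔ i < s.countP (c ≤ ·) := by
  constructor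
  · intro hc
    have htake : (s.take (i + 1)).countP (c ≤ ·) = i + 1 := by
      rw [countP_eq_length.2, length_take]
      · omega
      intro a ha
      obtain ⟨j, hj, rfl⟩ := mem_iff_getElem.1 ha
      rw [length_take] at hj
      simpa using hc.trans (hs.getElem_ge_getElem_of_le (by omega))
    have := (take_sublist (i + 1) s).countP_le (p := (c ≤ ·))
    omega
  · intro hlt
    by_contra! hc
    have hdrop : (s.drop i).countP (c ≤ ·) = 0 := by
      rw [countP_eq_zero]
      intro a ha
      obtain ⟨j, _, rfl⟩ := mem_iff_getElem.1 ha
      simpa using (hs.getElem_ge_getElem_of_le (Nat.le_add_right i j)).trans_lt hc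
    have htake := countP_le_length (p := (c ≤ ·)) (l := s.take i)
    rw [← take_append_drop i s, countP_append, hdrop] at hlt
    rw [length_take] at htake
    omega

end List

theorem kmax_eq_zero_of_length_le {l : List ℝ} {k : ℕ} (h : l.length ≤ k - 1) : kmax l k = 0 :=
  List.getD_eq_default _ _ (by rwa [List.length_insertionSort])

theorem le_kmax_iff {l : List ℝ} {k : ℕ} (hk : k - 1 < l.length) (c : ℝ) :
    c ≤ kmax l k ↔ k - 1 < l.countP (c ≤ ·) := by
  have hk' : k - 1 < (l.insertionSort (· ≥ ·)).length := by rwa [List.length_insertionSort]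
  rw [kmax, List.getD_eq_getElem _ _ hk',
    List.sortedGE_insertionSort.le_getElem_iff_lt_countP hk',
    (List.perm_insertionSort _ l).countP_eq]

theorem kmax_perm {l l' : List ℝ} (h : l.Perm l') (k : ℕ) : kmax l k = kmax l' k := by
  rw [kmax, kmax, ((List.perm_insertionSort _ l).trans (h.trans
    (List.perm_insertionSort _ l').symm)).eq_of_sortedGE List.sortedGE_insertionSort
    List.sortedGE_insertionSort]

theorem kmax_ofFn_le_kmax_ofFn_add {n : ℕ} {ε : ℝ} (hε : 0 ≤ ε) {f g : Fin n → ℝ}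
    (h : ∀ i, f i ≤ g i + ε) (k : ℕ) : kmax (List.ofFn f) k ≤ kmax (List.ofFn g) k + ε := by
  by_cases hk : k - 1 < n
  · set c := kmax (List.ofFn f) k
    have hcf : k - 1 < (List.ofFn f).countP (c ≤ ·) :=
      (le_kmax_iff (by simpa) c).1 le_rfl
    have hcount : (List.ofFn f).countP (c ≤ ·) ≤ (List.ofFn g).countP (c - ε ≤ ·) := by
      simp only [List.ofFn_eq_map, List.countP_map]
      refine List.countP_mono_left fun i _ hi => ?_
      simp only [Function.comp_apply, decide_eq_true_eq] at hi ⊢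
      linarith [h i]
    linarith [(le_kmax_iff (by simpa) (c - ε)).2 (hcf.trans_le hcount)]
  · rw [kmax_eq_zero_of_length_le (by simpa using hk),
      kmax_eq_zero_of_length_le (by simpa using hk)]
    linarith

theorem abs_kmax_ofFn_sub_kmax_ofFn_le {n : ℕ} {ε : ℝ} (hε : 0 ≤ ε) {f g : Fin n → ℝ}
    (h : ∀ i, |f i - g i| ≤ ε) (k : ℕ) :
    |kmax (List.ofFn f) k - kmax (List.ofFn g) k| ≤ ε := by
  rw [abs_sub_le_iff]
  constructor
  · linarith [kmax_ofFn_le_kmax_ofFn_add hε (f := f) (g := g)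
      (fun i => by linarith [abs_le.1 (h i)]) k]
  · linarith [kmax_ofFn_le_kmax_ofFn_add hε (f := g) (g := f)
      (fun i => by linarith [abs_le.1 (h i)]) k]

theorem abs_tent_sub_tent_le (p q : ℝ × ℝ) (t : ℝ) :
    |tent p t - tent q t| ≤ max |p.1 - q.1| |p.2 - q.2| := by
  calc |tent p t - tent q t|
      ≤ max |min (t - p.1) (p.2 - t) - min (t - q.1) (q.2 - t)| |(0 : ℝ) - 0| :=
        abs_max_sub_max_le_max _ _ _ _
    _ ≤ max (max |(t - p.1) - (t - q.1)| |(p.2 - t) - (q.2 - t)|) 0 := by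
        rw [sub_self, abs_zero]
        exact max_le_max_right 0 (abs_min_sub_min_le_max _ _ _ _)
    _ = max |p.1 - q.1| |p.2 - q.2| := by
        rw [max_eq_left (by positivity), abs_sub_comm, sub_sub_sub_cancel_left,
          sub_sub_sub_cancel_right]

theorem abs_landscape_sub_landscape_le {n : ℕ} {ε : ℝ} (hε : 0 ≤ ε) {D D' : Fin n → ℝ × ℝ}
    (π : Equiv.Perm (Fin n))
    (h : ∀ i, max |(D i).1 - (D' (π i)).1| |(D i).2 - (D' (π i)).2| ≤ ε) (k : ℕ) (t : ℝ) :
    |landscape D k t - landscape D' k t| ≤ ε := by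
  rw [landscape, landscape,
    ← kmax_perm (π.ofFn_comp_perm fun i => tent (D' i) t) k]
  exact abs_kmax_ofFn_sub_kmax_ofFn_le hε
    (fun i => (abs_tent_sub_tent_le (D i) (D' (π i)) t).trans (h i)) k

/-- Stability of `k`-max and of persistence landscapes: uniformly `ε`-close families
have `ε`-close `k`-th largest values, and diagrams matched within `ε` in sup norm
have uniformly `ε`-close landscapes. -/
theorem stmt11 {n : ℕ} (ε : ℝ) (hε : 0 ≤ ε) :
    (∀ f g : Fin n → ℝ, (∀ i, |f i - g i| ≤ ε) → ∀ k : ℕ,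
      |kmax (List.ofFn f) k - kmax (List.ofFn g) k| ≤ ε) ∧
    (∀ D D' : Fin n → ℝ × ℝ, ∀ π : Equiv.Perm (Fin n),
      (∀ i, max |(D i).1 - (D' (π i)).1| |(D i).2 - (D' (π i)).2| ≤ ε) →
      ∀ (k : ℕ) (t : ℝ), |landscape D k t - landscape D' k t| ≤ ε) :=
  ⟨fun _ _ h k => abs_kmax_ofFn_sub_kmax_ofFn_le hε h k,
    fun _ _ π h k t => abs_landscape_sub_landscape_le hε π h k t⟩
end
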